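/- arXiv:1406.1339 — 10 statements merged into one kernel-verified Lean document; each statement's English description precedes it below -/
import Mathlib

section
/- Let ℓ ≥ 1, let e ∈ ℤ^ℓ with eᵢ ≥ 1 for all i, let a ∈ ℕ^ℓ, λ ∈ ℕ and β ∈ ℚ. Then P_{a,λ,β}(s+1) = P_{a,λ,β+1}(s) as polynomials in ℚ[s]; that is, substituting s+1 for s in P_{a,λ,β} yields exactly P_{a,λ,β+1}. -/
/-- `P_{a,β}(s) = ∏ᵢ ∏_{k=1}^{aᵢ} (s + (⌊β eᵢ⌋ + k)/eᵢ)` in `ℚ[s]`. -/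
noncomputable def PPoly (ℓ : ℕ) (e : Fin ℓ → ℤ) (β : ℚ) (a : Fin ℓ → ℕ) :
    Polynomial ℚ :=
  ∏ i : Fin ℓ, ∏ k ∈ Finset.Icc 1 (a i),
    (Polynomial.X + Polynomial.C (((⌊β * (e i : ℚ)⌋ : ℚ) + (k : ℚ)) / (e i : ℚ)))

/-- `P_{a,λ,β}(s) = (s+β)^λ · P_{a,β}(s)`. -/
noncomputable def PPolyLam (ℓ : ℕ) (e : Fin ℓ → ℤ) (β : ℚ) (a : Fin ℓ → ℕ)
    (lam : ℕ) : Polynomial ℚ :=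
  (Polynomial.X + Polynomial.C β) ^ lam * PPoly ℓ e β a

/-- Substituting `s + 1` for `s` in `P_{a,λ,β}` yields exactly `P_{a,λ,β+1}`. -/
theorem stmt_3 (ℓ : ℕ) (hℓ : 1 ≤ ℓ) (e : Fin ℓ → ℤ) (he : ∀ i, 1 ≤ e i)
    (a : Fin ℓ → ℕ) (lam : ℕ) (β : ℚ) :
    (PPolyLam ℓ e β a lam).comp (Polynomial.X + 1) = PPolyLam ℓ e (β + 1) a lam := by
  have hfloor : ∀ i : Fin ℓ, ⌊(β + 1) * (e i : ℚ)⌋ = ⌊β * (e i : ℚ)⌋ + e i := by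
    intro i
    rw [add_mul, one_mul]
    rw [show (e i : ℚ) = ((e i : ℤ) : ℚ) from rfl, Int.floor_add_intCast]
  unfold PPolyLam PPoly
  rw [Polynomial.mul_comp, Polynomial.pow_comp, Polynomial.prod_comp]
  congr 1
  · rw [Polynomial.add_comp, Polynomial.X_comp, Polynomial.C_comp, map_add,
      Polynomial.C_1]
    ring
  · refine Finset.prod_congr rfl fun i _ => ?_
    rw [Polynomial.prod_comp]
    refine Finset.prod_congr rfl fun k _ => ?_
    rw [Polynomial.add_comp, Polynomial.X_comp, Polynomial.C_comp, hfloor i]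
    have hei : (e i : ℚ) ≠ 0 := by
      exact_mod_cast (lt_of_lt_of_le zero_lt_one (he i)).ne'
    push_cast
    rw [add_assoc, ← Polynomial.C_1, ← Polynomial.C_add]
    congr 1
    field_simp
    ring
end

section
/- Let ℓ ≥ 1, let e ∈ ℤ^ℓ with eᵢ ≥ 1 for all i, let a ∈ ℕ^ℓ, j ∈ ℕ and β ∈ ℚ. Define a' ∈ ℕ^ℓ by a'ᵢ := max(aᵢ − j·eᵢ, 0). Then P_{a',β}(s) divides the polynomial P_{a,β}(s − j) in ℚ[s]. -/
lemma shift_dvd (a m : ℕ) (f : ℕ → Polynomial ℚ) :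
    ∏ k ∈ Finset.Icc 1 (a - m), f (k + m) ∣ ∏ k ∈ Finset.Icc 1 a, f k := by
  have h1 : ∏ k ∈ Finset.Icc 1 (a - m), f (k + m)
      = ∏ k ∈ Finset.Icc (1 + m) (a - m + m), f k := by
    rw [← Finset.map_add_right_Icc, Finset.prod_map]
    rfl
  rw [h1]
  refine Finset.prod_dvd_prod_of_subset _ _ _ fun x hx => ?_
  simp only [Finset.mem_Icc] at hx ⊢
  omega

/-- With `a'ᵢ := max(aᵢ − j·eᵢ, 0)`, the polynomial `P_{a',β}(s)` divides
`P_{a,β}(s − j)` in `ℚ[s]`. -/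
theorem stmt_4 (ℓ : ℕ) (hℓ : 1 ≤ ℓ) (e : Fin ℓ → ℤ) (he : ∀ i, 1 ≤ e i)
    (a : Fin ℓ → ℕ) (j : ℕ) (β : ℚ) :
    PPoly ℓ e β (fun i => ((a i : ℤ) - (j : ℤ) * e i).toNat) ∣
      (PPoly ℓ e β a).comp (Polynomial.X - Polynomial.C (j : ℚ)) := by
  unfold PPoly
  rw [Polynomial.prod_comp]
  refine Finset.prod_dvd_prod_of_dvd _ _ fun i _ => ?_
  rw [Polynomial.prod_comp]
  have hei := he i
  have hnn : ((e i).toNat : ℤ) = e i := Int.toNat_of_nonneg (by omega)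
  set E : ℚ := (e i : ℚ) with hE
  have hE1 : (1 : ℚ) ≤ E := by rw [hE]; exact_mod_cast hei
  have hE0 : E ≠ 0 := by linarith
  set b : ℚ := (⌊β * E⌋ : ℚ) with hb
  set m : ℕ := j * (e i).toNat with hm
  have hnnQ : (((e i).toNat : ℕ) : ℚ) = E := by
    rw [hE]; exact_mod_cast congrArg (Int.cast : ℤ → ℚ) hnn
  have hmE : (m : ℚ) = (j : ℚ) * E := by
    rw [hm]; push_cast; rw [hnnQ]
  have h1 : ((j : ℤ) * e i) = (m : ℤ) := by
    rw [hm]; push_cast; rw [hnn]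
  have ha' : ((a i : ℤ) - (j : ℤ) * e i).toNat = a i - m := by
    rw [h1]; omega
  simp only [ha']
  have key : ∀ k : ℕ, (Polynomial.X + Polynomial.C ((b + (k : ℚ)) / E)).comp
      (Polynomial.X - Polynomial.C (j : ℚ))
      = Polynomial.X + Polynomial.C ((b + (k : ℚ)) / E - (j : ℚ)) := by
    intro k
    simp [Polynomial.add_comp, sub_eq_add_neg]
    ring
  simp only [key]
  calc ∏ k ∈ Finset.Icc 1 (a i - m), (Polynomial.X + Polynomial.C ((b + (k : ℚ)) / E))
      = ∏ k ∈ Finset.Icc 1 (a i - m),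
        (Polynomial.X + Polynomial.C ((b + ((k + m : ℕ) : ℚ)) / E - (j : ℚ))) := by
        refine Finset.prod_congr rfl fun k _ => ?_
        congr 1
        push_cast
        field_simp
        rw [hmE]
        ring
    _ ∣ ∏ k ∈ Finset.Icc 1 (a i),
        (Polynomial.X + Polynomial.C ((b + (k : ℚ)) / E - (j : ℚ))) :=
        shift_dvd (a i) m (fun k => Polynomial.X + Polynomial.C ((b + (k : ℚ)) / E - (j : ℚ)))
end

section
/- Let ℓ ≥ 1, let e ∈ ℤ^ℓ with eᵢ ≥ 1 for all i, and let α ∈ ℚ with 0 ≤ α < 1. Given b ∈ ℕ^ℓ, define a ∈ ℕ^ℓ by: aᵢ = bᵢ if α·eᵢ ∉ ℤ; aᵢ = bᵢ − 1 if α·eᵢ ∈ ℤ and bᵢ ≥ 1; aᵢ = 0 if α·eᵢ ∈ ℤ and bᵢ = 0. Let N := #{ i : α·eᵢ ∈ ℤ and bᵢ ≥ 1 }. Then p_{b,<α}(s,ħ) = (s + α·ħ)^N · p_{a,α}(s,ħ) in ℚ[s,ħ]. -/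
open MvPolynomial

/-- `p_{a,α}(s,ħ) = ∏ᵢ ∏_{j=1}^{aᵢ} (s + (j + ⌊α eᵢ⌋)ħ/eᵢ)` in `ℚ[s,ħ]`,
with `s = X 0` and `ħ = X 1`. -/
noncomputable def pPoly (ℓ : ℕ) (e : Fin ℓ → ℤ) (α : ℚ) (a : Fin ℓ → ℕ) :
    MvPolynomial (Fin 2) ℚ :=
  ∏ i : Fin ℓ, ∏ j ∈ Finset.Icc 1 (a i),
    (X 0 + C (((j : ℚ) + (⌊α * (e i : ℚ)⌋ : ℚ)) / (e i : ℚ)) * X 1)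

/-- `p_{a,<α}(s,ħ) = ∏ᵢ ∏_{j=0}^{aᵢ−1} (s + (j + ⌈α eᵢ⌉)ħ/eᵢ)` in `ℚ[s,ħ]`. -/
noncomputable def pPolyLt (ℓ : ℕ) (e : Fin ℓ → ℤ) (α : ℚ) (a : Fin ℓ → ℕ) :
    MvPolynomial (Fin 2) ℚ :=
  ∏ i : Fin ℓ, ∏ j ∈ Finset.range (a i),
    (X 0 + C (((j : ℚ) + (⌈α * (e i : ℚ)⌉ : ℚ)) / (e i : ℚ)) * X 1)

/-!
For a single index with `q = α e`, the factors of `p_{b,<α}` are `s + (j + ⌈q⌉)ħ/e`,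
`0 ≤ j < b`, and those of `p_{a,α}` are `s + (j + ⌊q⌋)ħ/e`, `1 ≤ j ≤ a`. If `q ∉ ℤ` then
`⌈q⌉ = ⌊q⌋ + 1` and the two lists agree after the shift `j ↦ j + 1`. If `q ∈ ℤ` then
`⌈q⌉ = ⌊q⌋ = q`; the factor `j = 0` is `s + (q/e)ħ = s + αħ`, and the remaining `b − 1`
factors are those of `p_{a,α}`.
-/

open Finset

section

variable {M : Type*} [CommMonoid M]

theorem prod_Icc_one_eq_prod_range (f : ℕ → M) (n : ℕ) :
    ∏ j ∈ Icc 1 n, f j = ∏ j ∈ range n, f (j + 1) := by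
  rw [← Ico_add_one_right_eq_Icc, prod_Ico_eq_prod_range, Nat.add_sub_cancel]
  simp only [add_comm]

theorem prod_range_ceil_of_den_ne_one (g : ℚ → M) {q : ℚ} (hq : q.den ≠ 1) (b : ℕ) :
    ∏ j ∈ range b, g (j + ⌈q⌉) = ∏ j ∈ Icc 1 b, g (j + ⌊q⌋) := by
  have hceil : ⌈q⌉ = ⌊q⌋ + 1 := by
    refine (Int.ceil_eq_floor_add_one_iff_notMem q).2 ?_
    rintro ⟨n, rfl⟩
    exact hq (Rat.den_intCast n)
  rw [prod_Icc_one_eq_prod_range, hceil]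
  refine prod_congr rfl fun j _ => ?_
  push_cast
  ring_nf

theorem prod_range_succ_ceil_of_den_eq_one (g : ℚ → M) {q : ℚ} (hq : q.den = 1) (b : ℕ) :
    ∏ j ∈ range (b + 1), g (j + ⌈q⌉) = g q * ∏ j ∈ Icc 1 b, g (j + ⌊q⌋) := by
  obtain ⟨n, rfl⟩ : ∃ n : ℤ, (n : ℚ) = q := ⟨q.num, (Rat.den_eq_one_iff q).1 hq⟩
  rw [prod_range_succ', prod_Icc_one_eq_prod_range, Int.ceil_intCast, Int.floor_intCast, mul_comm]
  simp

theorem prod_range_ceil_eq (g : ℚ → M) (q : ℚ) (b : ℕ) :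
    ∏ j ∈ range b, g (j + ⌈q⌉) =
      (if q.den = 1 ∧ 1 ≤ b then g q else 1) *
        ∏ j ∈ Icc 1 (if q.den = 1 then (if 1 ≤ b then b - 1 else 0) else b), g (j + ⌊q⌋) := by
  by_cases hq : q.den = 1
  · rcases b with _ | b
    · simp
    · simp [hq, prod_range_succ_ceil_of_den_eq_one g hq]
  · simp [hq, prod_range_ceil_of_den_ne_one g hq]

end

theorem stmt_5_general (ℓ : ℕ) (e : Fin ℓ → ℤ) (he : ∀ i, 1 ≤ e i)
    (α : ℚ) (b : Fin ℓ → ℕ) :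
    pPolyLt ℓ e α b =
      (X 0 + C α * X 1) ^
          (Finset.univ.filter
            (fun i : Fin ℓ => (α * (e i : ℚ)).den = 1 ∧ 1 ≤ b i)).card *
        pPoly ℓ e α
          (fun i => if (α * (e i : ℚ)).den = 1 then
              (if 1 ≤ b i then b i - 1 else 0) else b i) := by
  have hα : ∀ i, α * (e i : ℚ) / (e i : ℚ) = α := fun i =>
    mul_div_cancel_right₀ α (by exact_mod_cast (zero_lt_one.trans_le (he i)).ne')
  unfold pPolyLt pPoly
  rw [prod_congr rfl fun i _ =>
      prod_range_ceil_eq (fun c => X 0 + C (c / (e i : ℚ)) * X 1) (α * e i) (b i),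
    prod_mul_distrib, ← prod_filter]
  simp only [hα, prod_const]

/-- With `aᵢ = bᵢ` if `α eᵢ ∉ ℤ`, `aᵢ = bᵢ − 1` if `α eᵢ ∈ ℤ` and `bᵢ ≥ 1`,
`aᵢ = 0` if `α eᵢ ∈ ℤ` and `bᵢ = 0`, and
`N = #{i : α eᵢ ∈ ℤ ∧ bᵢ ≥ 1}`, one has
`p_{b,<α}(s,ħ) = (s + α ħ)^N · p_{a,α}(s,ħ)`. -/
theorem stmt_5 (ℓ : ℕ) (hℓ : 1 ≤ ℓ) (e : Fin ℓ → ℤ) (he : ∀ i, 1 ≤ e i)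
    (α : ℚ) (hα0 : 0 ≤ α) (hα1 : α < 1) (b : Fin ℓ → ℕ) :
    pPolyLt ℓ e α b =
      (X 0 + C α * X 1) ^
          (Finset.univ.filter
            (fun i : Fin ℓ => (α * (e i : ℚ)).den = 1 ∧ 1 ≤ b i)).card *
        pPoly ℓ e α
          (fun i => if (α * (e i : ℚ)).den = 1 then
              (if 1 ≤ b i then b i - 1 else 0) else b i) :=
  stmt_5_general ℓ e he α b
end

section
/- Let M be a module over a commutative ring R, let ∂ : M → M be an R-linear map, and let F : ℤ → (submodules of M) be an increasing family with ∂(F_j) ⊆ F_{j+1} for all j ∈ ℤ. Let (m_j)_{j∈ℤ} be a family of elements of M such that m_j = 0 for all j < N, for some N ∈ ℤ. If ∂m_j + m_{j+1} ∈ F_j for every j ∈ ℤ, then m_j ∈ F_{j−1} for every j ∈ ℤ. -/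
theorem succ_mem_of_mem_of_map_add_mem {R M : Type*} [Ring R] [AddCommGroup M] [Module R M]
    {d : M →ₗ[R] M} {F : ℤ → Submodule R M} (hd : ∀ j : ℤ, (F j).map d ≤ F (j + 1))
    {m : ℤ → M} {j : ℤ} (hj : m j ∈ F (j - 1)) (h : d (m j) + m (j + 1) ∈ F j) :
    m (j + 1) ∈ F j := by
  have hdm : d (m j) ∈ F j := by
    simpa using hd (j - 1) (Submodule.mem_map_of_mem hj)
  simpa using Submodule.sub_mem _ h hdm

theorem stmt_8_general {R M : Type*} [CommRing R] [AddCommGroup M] [Module R M]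
    (d : M →ₗ[R] M) (F : ℤ → Submodule R M)
    (hd : ∀ j : ℤ, (F j).map d ≤ F (j + 1))
    (m : ℤ → M) (N : ℤ) (hN : ∀ j < N, m j = 0)
    (h : ∀ j : ℤ, d (m j) + m (j + 1) ∈ F j) :
    ∀ j : ℤ, m j ∈ F (j - 1) := by
  intro j
  rcases lt_or_ge j N with hjN | hjN
  · simp [hN j hjN]
  obtain hj : N - 1 ≤ j := by omega
  clear hjN
  induction j, hj using Int.leInduction with
  | base => simp [hN (N - 1) (by omega)]
  | succ k _ ih => simpa using succ_mem_of_mem_of_map_add_mem hd ih (h k)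

/-- If `F` is increasing with `d(F_j) ⊆ F_{j+1}`, `(m_j)` vanishes for `j < N`,
and `d m_j + m_{j+1} ∈ F_j` for every `j`, then `m_j ∈ F_{j−1}` for every `j`. -/
theorem stmt_8 {R M : Type*} [CommRing R] [AddCommGroup M] [Module R M]
    (d : M →ₗ[R] M) (F : ℤ → Submodule R M) (hmono : Monotone F)
    (hd : ∀ j : ℤ, (F j).map d ≤ F (j + 1))
    (m : ℤ → M) (N : ℤ) (hN : ∀ j < N, m j = 0)
    (h : ∀ j : ℤ, d (m j) + m (j + 1) ∈ F j) :
    ∀ j : ℤ, m j ∈ F (j - 1) :=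
  stmt_8_general d F hd m N hN h
end

section
/- Let V be a module over a commutative ring R and let τ, ħ : V → V be commuting R-linear endomorphisms such that τ is injective and such that for every x ∈ V, ħx ∈ τ(V) implies x ∈ τ(V). Then ħ is injective on V/(τ−ħ)V; that is, for every m ∈ V, if ħm ∈ (τ−ħ)(V) then m ∈ (τ−ħ)(V). -/
/-- If `τ, ħ` are commuting endomorphisms of `V`, `τ` is injective, and
`ħx ∈ τ(V)` implies `x ∈ τ(V)`, then `ħ` is injective on `V/(τ−ħ)V`:
`ħm ∈ (τ−ħ)(V)` implies `m ∈ (τ−ħ)(V)`. -/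
theorem stmt_9 {R V : Type*} [CommRing R] [AddCommGroup V] [Module R V]
    (τ h : V →ₗ[R] V) (hcomm : τ ∘ₗ h = h ∘ₗ τ)
    (hinj : Function.Injective τ)
    (hstrict : ∀ x : V, (∃ y, τ y = h x) → ∃ y, τ y = x) :
    ∀ m : V, (∃ y, (τ - h) y = h m) → ∃ y, (τ - h) y = m := by
  rintro m ⟨y, hy⟩
  simp only [LinearMap.sub_apply] at hy
  have hty : τ y = h (m + y) := by rw [map_add, ← hy]; abel
  obtain ⟨z, hz⟩ := hstrict (m + y) ⟨y, hty⟩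
  have hyz : y = h z := by
    apply hinj
    rw [hty, ← hz]
    exact (LinearMap.congr_fun hcomm z).symm
  refine ⟨z, ?_⟩
  rw [LinearMap.sub_apply, hz, ← hyz]
  abel
end

section
/- Let M be a module over the polynomial ring ℂ[∂] in one variable ∂, and let N := M ⊗_ℂ ℂ[v,v⁻¹] (equivalently, the module of finitely supported families (m_j)_{j∈ℤ} of elements of M, m_j being the coefficient of v^j). Define the ℂ-linear endomorphism D of N by D(m ⊗ v^j) := (∂m) ⊗ v^j + m ⊗ v^{j+1}. Then: (1) D is injective; (2) the cokernel N/D(N) is isomorphic to the localized module M_∂ := (localization of M at the multiplicative set of powers of ∂), via the map induced by m ⊗ v^j ↦ (−1)^j ∂^j·(image of m in M_∂), where ∂^j for j < 0 means division by ∂^{−j} in M_∂; moreover under this isomorphism the multiplication by v on N/D(N) corresponds to the action of −∂ on M_∂. -/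
/-! Modulo `D(N)`, a coefficient can be moved down one `v`-degree at the cost of a factor `−∂`:
`m v^j ≡ (−∂m) v^{j−1}`. Hence every element of `N` is congruent to a single monomial `m v^j`,
and such a monomial lies in `D(N)` as soon as `∂^n m = 0` for some `n`, i.e. as soon as
`loc m = 0`. The map `m v^j ↦ (−1)^j ∂^j loc m` kills `D(N)`, intertwines `v` with `−∂`, and
hits `m / ∂^n` in degree `−n`; so it identifies `N / D(N)` with `M_∂`. Injectivity of `D` is
read off the top `v`-degree. -/

open Polynomial

noncomputable section

variable (M : Type*) [AddCommGroup M] [Module (Polynomial ℂ) M]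
  [Module ℂ M] [IsScalarTower ℂ (Polynomial ℂ) M]

/-- Multiplication by `∂` (the polynomial variable) as a ℂ-linear map on `M`. -/
def delSmul : M →ₗ[ℂ] M :=
  (LinearMap.lsmul (Polynomial ℂ) M (X : Polynomial ℂ)).restrictScalars ℂ

/-- `N = M ⊗_ℂ ℂ[v,v⁻¹]`, as finitely supported families indexed by the
`v`-degree. -/
abbrev Nmod := ℤ →₀ M

/-- `D(m ⊗ v^j) = (∂m) ⊗ v^j + m ⊗ v^{j+1}`. -/
def Dmap : Nmod M →ₗ[ℂ] Nmod M :=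
  Finsupp.lsum ℕ fun j : ℤ =>
    (Finsupp.lsingle j).comp (delSmul M) + Finsupp.lsingle (j + 1)

/-- Multiplication by `v`: `m ⊗ v^j ↦ m ⊗ v^{j+1}`. -/
def Vmap : Nmod M →ₗ[ℂ] Nmod M :=
  Finsupp.lsum ℕ fun j : ℤ => Finsupp.lsingle (j + 1)

/-- The localization `M_∂` of `M` at the powers of `∂`. -/
abbrev Mloc := LocalizedModule (Submonoid.powers (X : Polynomial ℂ)) M

instance : Module ℂ (Mloc M) :=
  Module.compHom _ (algebraMap ℂ (Polynomial ℂ))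

/-- The action of `∂` on `M_∂`, as a unit of the endomorphism ring (it is
invertible on the localization); its `ℤ`-powers give the meaning of `∂^j`
for `j < 0`. -/
def delUnit : (Module.End (Polynomial ℂ) (Mloc M))ˣ :=
  (IsLocalizedModule.map_units
    (LocalizedModule.mkLinearMap (Submonoid.powers (X : Polynomial ℂ)) M)
    ⟨X, Submonoid.mem_powers _⟩).unit

lemma units_zsmul_eq_zero_iff {A : Type*} [AddGroup A] (u : ℤˣ) (a : A) :
    (u : ℤ) • a = 0 ↔ a = 0 := by
  rcases Int.units_eq_one_or u with rfl | rfl <;> simp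

/- `Mloc M` also inherits a `ℂ`-action from `M`, not defeq to `instModuleComplexMloc`; the tower
is needed for the latter, which is the one in `Nmod M →ₗ[ℂ] Mloc M`. -/
instance : @IsScalarTower ℂ ℂ[X] (Mloc M) _ _ (instModuleComplexMloc M).toSMul :=
  @IsScalarTower.mk _ _ _ _ _ (instModuleComplexMloc M).toSMul fun c p x => by
    rw [Algebra.smul_def, mul_smul]; rfl

def zpowLoc (j : ℤ) : M →ₗ[ℂ] Mloc M :=
  (((delUnit M ^ j : (Module.End ℂ[X] (Mloc M))ˣ) : Module.End ℂ[X] (Mloc M)).restrictScalars ℂ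
    ).comp ((LocalizedModule.mkLinearMap (Submonoid.powers (X : ℂ[X])) M).restrictScalars ℂ)

def toMloc : Nmod M →ₗ[ℂ] Mloc M :=
  Finsupp.lsum ℕ fun j : ℤ => ((Int.negOnePow j : ℤˣ) : ℤ) • zpowLoc M j

variable {M}

omit [Module ℂ M] [IsScalarTower ℂ ℂ[X] M] in
lemma delUnit_apply (x : Mloc M) : (delUnit M : Module.End ℂ[X] (Mloc M)) x = (X : ℂ[X]) • x := by
  rw [delUnit, IsUnit.unit_spec, Module.algebraMap_end_apply]

lemma zpowLoc_apply (j : ℤ) (m : M) :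
    zpowLoc M j m = ((delUnit M ^ j : (Module.End ℂ[X] (Mloc M))ˣ) : Module.End ℂ[X] (Mloc M))
      (LocalizedModule.mkLinearMap (Submonoid.powers (X : ℂ[X])) M m) := rfl

lemma zpowLoc_add_one (j : ℤ) (m : M) : zpowLoc M (j + 1) m = (X : ℂ[X]) • zpowLoc M j m := by
  rw [zpowLoc_apply, zpowLoc_apply, zpow_add_one, Units.val_mul, Module.End.mul_apply,
    delUnit_apply, map_smul]

lemma zpowLoc_X_smul (j : ℤ) (m : M) :
    zpowLoc M j ((X : ℂ[X]) • m) = (X : ℂ[X]) • zpowLoc M j m := by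
  rw [zpowLoc_apply, zpowLoc_apply, map_smul, map_smul]

lemma zpowLoc_neg_natCast (n : ℕ) (m : M) :
    zpowLoc M (-(n : ℤ)) m = LocalizedModule.mk m ⟨X ^ n, pow_mem (Submonoid.mem_powers _) n⟩ := by
  have hpow : ((delUnit M ^ n : (Module.End ℂ[X] (Mloc M))ˣ) : Module.End ℂ[X] (Mloc M))
      (LocalizedModule.mk m ⟨X ^ n, pow_mem (Submonoid.mem_powers _) n⟩) =
      LocalizedModule.mk m 1 := by
    rw [Units.val_pow_eq_pow_val, delUnit, IsUnit.unit_spec, ← map_pow,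
      Module.algebraMap_end_apply]
    exact (LocalizedModule.smul'_mk (X ^ n) _ _).trans
      (LocalizedModule.mk_cancel ⟨X ^ n, pow_mem (Submonoid.mem_powers _) n⟩ m)
  rw [zpowLoc_apply, LocalizedModule.mkLinearMap_apply, ← hpow, zpow_neg, zpow_natCast,
    ← Module.End.mul_apply, ← Units.val_mul, inv_mul_cancel, Units.val_one, Module.End.one_apply]

lemma toMloc_single (j : ℤ) (m : M) :
    toMloc M (Finsupp.single j m) = ((Int.negOnePow j : ℤˣ) : ℤ) • zpowLoc M j m := by
  rw [toMloc, Finsupp.lsum_single]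
  rfl

lemma Dmap_single (j : ℤ) (m : M) :
    Dmap M (Finsupp.single j m) =
      Finsupp.single j ((X : ℂ[X]) • m) + Finsupp.single (j + 1) m := by
  simp [Dmap, delSmul]

omit [Module ℂ[X] M] [IsScalarTower ℂ ℂ[X] M] in
lemma Vmap_single (j : ℤ) (m : M) : Vmap M (Finsupp.single j m) = Finsupp.single (j + 1) m := by
  simp [Vmap]

lemma Dmap_apply (f : Nmod M) (k : ℤ) : Dmap M f k = (X : ℂ[X]) • f k + f (k - 1) := by
  induction f using Finsupp.induction_linear with
  | zero => simp
  | add f g hf hg => simp only [map_add, Finsupp.add_apply, hf, hg, smul_add]; abel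
  | single j m =>
    rw [Dmap_single]
    simp only [Finsupp.add_apply, Finsupp.single_apply]
    split_ifs <;> first | (exfalso; omega) | simp

lemma Dmap_injective : Function.Injective (Dmap M) := by
  rw [injective_iff_map_eq_zero]
  intro f hf
  by_contra hne
  have hsupp : f.support.Nonempty := Finsupp.support_nonempty_iff.mpr hne
  set top := f.support.max' hsupp
  have htop : f top ≠ 0 := Finsupp.mem_support_iff.mp (f.support.max'_mem hsupp)
  have habove : f (top + 1) = 0 := by
    by_contra h
    have := f.support.le_max' (top + 1) (Finsupp.mem_support_iff.mpr h)
    omega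
  have := Dmap_apply f (top + 1)
  rw [hf, habove, add_sub_cancel_right, smul_zero, zero_add] at this
  exact htop this.symm

lemma toMloc_Dmap (f : Nmod M) : toMloc M (Dmap M f) = 0 := by
  induction f using Finsupp.induction_linear with
  | zero => simp
  | add f g hf hg => rw [map_add, map_add, hf, hg, add_zero]
  | single j m =>
    rw [Dmap_single, map_add, toMloc_single, toMloc_single, zpowLoc_add_one, zpowLoc_X_smul,
      Int.negOnePow_succ, Units.val_neg, neg_zsmul, add_neg_cancel]

lemma toMloc_Vmap (f : Nmod M) : toMloc M (Vmap M f) = -((X : ℂ[X]) • toMloc M f) := by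
  induction f using Finsupp.induction_linear with
  | zero => simp
  | add f g hf hg => rw [map_add, map_add, hf, hg, map_add, smul_add, neg_add]
  | single j m =>
    rw [Vmap_single, toMloc_single, toMloc_single, zpowLoc_add_one, Int.negOnePow_succ,
      Units.val_neg, neg_zsmul, smul_comm]

lemma toMloc_surjective : Function.Surjective (toMloc M) := by
  intro x
  induction x using LocalizedModule.induction_on with
  | h m s =>
    obtain ⟨n, hn⟩ := s.2
    obtain rfl : (⟨X ^ n, pow_mem (Submonoid.mem_powers _) n⟩ :
        Submonoid.powers (X : ℂ[X])) = s := Subtype.ext hn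
    refine ⟨Finsupp.single (-n) (((Int.negOnePow (-n) : ℤˣ) : ℤ) • m), ?_⟩
    rw [toMloc_single, map_zsmul, smul_smul, ← Units.val_mul, Int.units_mul_self,
      Units.val_one, one_smul, zpowLoc_neg_natCast]

lemma single_smodEq_single_sub (n : ℕ) (j : ℤ) (m : M) :
    Finsupp.single j m ≡ Finsupp.single (j - n) ((-X : ℂ[X]) ^ n • m)
      [SMOD LinearMap.range (Dmap M)] := by
  induction n generalizing j m with
  | zero => simp
  | succ n ih =>
    have step : Finsupp.single j m ≡ Finsupp.single (j - 1) ((-X : ℂ[X]) • m)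
        [SMOD LinearMap.range (Dmap M)] := by
      rw [SModEq.sub_mem, neg_smul, Finsupp.single_neg, sub_neg_eq_add, add_comm]
      exact ⟨Finsupp.single (j - 1) m, by rw [Dmap_single, sub_add_cancel]⟩
    have h := step.trans (ih (j - 1) ((-X : ℂ[X]) • m))
    rwa [smul_smul, ← pow_succ, sub_sub, add_comm (1 : ℤ), ← Nat.cast_succ] at h

lemma exists_single_smodEq (f : Nmod M) :
    ∃ j m, f ≡ Finsupp.single j m [SMOD LinearMap.range (Dmap M)] := by
  induction f using Finsupp.induction_linear with
  | zero => exact ⟨0, 0, by rw [Finsupp.single_zero]⟩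
  | single j m => exact ⟨j, m, SModEq.rfl⟩
  | add f g hf hg =>
    obtain ⟨i, m, hm⟩ := hf
    obtain ⟨j, m', hm'⟩ := hg
    have hi := single_smodEq_single_sub (i - min i j).toNat i m
    have hj := single_smodEq_single_sub (j - min i j).toNat j m'
    rw [Int.toNat_of_nonneg (by omega), sub_sub_cancel] at hi hj
    have hsum := (hm.add hm').trans (hi.add hj)
    rw [← Finsupp.single_add] at hsum
    exact ⟨_, _, hsum⟩

lemma single_mem_range_Dmap_of_toMloc_eq_zero {j : ℤ} {m : M}
    (h : toMloc M (Finsupp.single j m) = 0) : Finsupp.single j m ∈ LinearMap.range (Dmap M) := by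
  have hloc : LocalizedModule.mkLinearMap (Submonoid.powers (X : ℂ[X])) M m = 0 := by
    rw [toMloc_single, zpowLoc_apply] at h
    exact ((Module.End.isUnit_iff _).1 (Units.isUnit _)).injective
      (((units_zsmul_eq_zero_iff _ _).1 h).trans (map_zero _).symm)
  obtain ⟨⟨s, hs⟩, hsm⟩ := (IsLocalizedModule.eq_zero_iff (Submonoid.powers (X : ℂ[X])) _).1 hloc
  obtain ⟨n, rfl⟩ := (Submonoid.mem_powers_iff _ _).1 hs
  rw [Submonoid.smul_def] at hsm
  have hred := single_smodEq_single_sub n j m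
  rwa [neg_pow, mul_smul, hsm, smul_zero, Finsupp.single_zero, SModEq.zero] at hred

lemma ker_toMloc : LinearMap.ker (toMloc M) = LinearMap.range (Dmap M) := by
  refine le_antisymm (fun f hf => ?_) (LinearMap.range_le_ker_iff.2 (LinearMap.ext toMloc_Dmap))
  obtain ⟨j, m, hfm⟩ := exists_single_smodEq f
  have hsingle : toMloc M (Finsupp.single j m) = 0 := by
    obtain ⟨g, hg⟩ := SModEq.sub_mem.1 hfm
    have := toMloc_Dmap g
    rwa [hg, map_sub, LinearMap.mem_ker.1 hf, zero_sub, neg_eq_zero] at this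
  exact SModEq.zero.1 (hfm.trans (SModEq.zero.2
    (single_mem_range_Dmap_of_toMloc_eq_zero hsingle)))

variable (M)

/-- (1) `D` is injective; (2) the cokernel `N/D(N)` is isomorphic to `M_∂`
via the map induced by `m ⊗ v^j ↦ (−1)^j ∂^j·loc(m)`, and under this
isomorphism multiplication by `v` corresponds to the action of `−∂`. -/
theorem stmt_11 :
    Function.Injective (Dmap M) ∧
    ∃ Φ : Nmod M →ₗ[ℂ] Mloc M,
      (∀ (j : ℤ) (m : M),
        Φ (Finsupp.single j m) =
          ((Int.negOnePow j : ℤˣ) •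
            (((delUnit M ^ j : (Module.End (Polynomial ℂ) (Mloc M))ˣ) :
                Module.End (Polynomial ℂ) (Mloc M))
              ((LocalizedModule.mkLinearMap
                  (Submonoid.powers (X : Polynomial ℂ)) M) m)))) ∧
      Function.Surjective Φ ∧
      LinearMap.ker Φ = LinearMap.range (Dmap M) ∧
      ∀ f : Nmod M, Φ (Vmap M f) = -((X : Polynomial ℂ) • Φ f) := by
  refine ⟨Dmap_injective, toMloc M, fun j m => ?_, toMloc_surjective, ker_toMloc, toMloc_Vmap⟩
  rw [toMloc_single, zpowLoc_apply, Units.smul_def]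

end
end

section
/- With the data (E, v, G, V, α) as in the context, for every integer p one has F'_{α+p} = Σ_{n≥0} v^n(G_p ∩ V_α) + Σ_{j=1}^{p} (G_{p−j} ∩ V_{α+j}) (sum of submodules of E). In particular F'_{α+p} = 0 for p < 0. -/
/-!
A summand `G_k ∩ V_{α+j}` of `F'_{α+p}` with `j = -n ≤ 0` equals `G_k ∩ v^n(V_α)`; since `v` is
injective and `G_k ∩ v^n(E) = v^n(G_{k-n})`, this is `v^n(G_{k-n} ∩ V_α) ⊆ v^n(G_p ∩ V_α)`.
A summand with `0 < j ≤ p` lies in `G_{p-j} ∩ V_{α+j}` by monotonicity of `G`, and one with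
`j > p` vanishes because then `k < 0`. Conversely every term on the right is such a summand.
-/

/-- `F'_{α+p} := Σ_{k+j ≤ p} (G_k ∩ V_{α+j})`. -/
def Fprime {R E : Type*} [CommRing R] [AddCommGroup E] [Module R E]
    (G : ℤ → Submodule R E) (V : ℚ → Submodule R E) (α : ℚ) (p : ℤ) :
    Submodule R E :=
  ⨆ (k : ℤ) (j : ℤ) (_ : k + j ≤ p), (G k ⊓ V (α + (j : ℚ)))

theorem Submodule.inf_map_eq_map_inf_of_inf_range_eq {R M N : Type*} [Semiring R]
    [AddCommMonoid M] [AddCommMonoid N] [Module R M] [Module R N] {f : M →ₗ[R] N}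
    (hf : Function.Injective f) {A : Submodule R N} {B C : Submodule R M}
    (h : A ⊓ LinearMap.range f = C.map f) :
    A ⊓ B.map f = (C ⊓ B).map f := by
  rw [Submodule.map_inf f hf, ← h, inf_assoc, inf_eq_right.mpr LinearMap.map_le_range]

namespace Fprime

variable {R E : Type*} [CommRing R] [AddCommGroup E] [Module R E]
  {v : E →ₗ[R] E} {G : ℤ → Submodule R E} {V : ℚ → Submodule R E} {α : ℚ}

theorem G_inf_V_le {k j p : ℤ} (h : k + j ≤ p) : G k ⊓ V (α + j) ≤ Fprime G V α p :=
  le_iSup_of_le k (le_iSup_of_le j (le_iSup_of_le h le_rfl))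

theorem V_sub_natCast (hVv : ∀ γ : ℚ, 0 ≤ γ → γ < 1 → ∀ k : ℕ, 1 ≤ k →
      V (γ - k) = (V γ).map (v ^ k))
    (hα0 : 0 ≤ α) (hα1 : α < 1) (n : ℕ) : V (α - n) = (V α).map (v ^ n) := by
  cases n with
  | zero => simp [Module.End.one_eq_id]
  | succ m => exact hVv α hα0 hα1 (m + 1) (by omega)

theorem G_inf_V_sub_natCast (hv : Function.Injective v)
    (hGv : ∀ (m : ℤ) (n : ℕ), G m ⊓ LinearMap.range (v ^ n) = (G (m - n)).map (v ^ n))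
    (hV : ∀ n : ℕ, V (α - n) = (V α).map (v ^ n)) (k : ℤ) (n : ℕ) :
    G k ⊓ V (α - n) = (G (k - n) ⊓ V α).map (v ^ n) := by
  have hvn : Function.Injective (v ^ n) := by
    rw [Module.End.coe_pow]; exact hv.iterate n
  rw [hV, Submodule.inf_map_eq_map_inf_of_inf_range_eq hvn (hGv k n)]

theorem le_iSup_map_sup_iSup_Icc (hv : Function.Injective v) (hGmono : Monotone G)
    (hG0 : ∀ k : ℤ, k < 0 → G k = ⊥)
    (hGv : ∀ (m : ℤ) (n : ℕ), G m ⊓ LinearMap.range (v ^ n) = (G (m - n)).map (v ^ n))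
    (hV : ∀ n : ℕ, V (α - n) = (V α).map (v ^ n)) (p : ℤ) :
    Fprime G V α p ≤
      (⨆ n : ℕ, (G p ⊓ V α).map (v ^ n)) ⊔
        ⨆ j ∈ Finset.Icc (1 : ℤ) p, (G (p - j) ⊓ V (α + (j : ℚ))) := by
  refine iSup_le fun k => iSup_le fun j => iSup_le fun hkj => ?_
  rcases le_or_gt j 0 with hj | hj
  · obtain ⟨n, rfl⟩ := Int.exists_eq_neg_ofNat hj
    have hα : α + ((-n : ℤ) : ℚ) = α - n := by push_cast; ring
    calc G k ⊓ V (α + ((-n : ℤ) : ℚ))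
        = (G (k - n) ⊓ V α).map (v ^ n) := by rw [hα, G_inf_V_sub_natCast hv hGv hV]
      _ ≤ (G p ⊓ V α).map (v ^ n) :=
          Submodule.map_mono (inf_le_inf_right _ (hGmono (by omega)))
      _ ≤ _ := le_sup_of_le_left (le_iSup (fun m : ℕ => (G p ⊓ V α).map (v ^ m)) n)
  rcases le_or_gt j p with hjp | hjp
  · calc G k ⊓ V (α + j)
        ≤ G (p - j) ⊓ V (α + j) := inf_le_inf_right _ (hGmono (by omega))
      _ ≤ _ := le_sup_of_le_right <|
          le_iSup₂ (f := fun j _ => G (p - j) ⊓ V (α + (j : ℚ))) j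
            (Finset.mem_Icc.mpr ⟨by omega, hjp⟩)
  · simp [hG0 k (by omega)]

theorem iSup_map_sup_iSup_Icc_le (hv : Function.Injective v)
    (hGv : ∀ (m : ℤ) (n : ℕ), G m ⊓ LinearMap.range (v ^ n) = (G (m - n)).map (v ^ n))
    (hV : ∀ n : ℕ, V (α - n) = (V α).map (v ^ n)) (p : ℤ) :
    (⨆ n : ℕ, (G p ⊓ V α).map (v ^ n)) ⊔
        ⨆ j ∈ Finset.Icc (1 : ℤ) p, (G (p - j) ⊓ V (α + (j : ℚ))) ≤
      Fprime G V α p := by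
  refine sup_le (iSup_le fun n => ?_) (iSup₂_le fun j _ => G_inf_V_le (by omega))
  have hα : α + ((-n : ℤ) : ℚ) = α - n := by push_cast; ring
  have := G_inf_V_sub_natCast hv hGv hV (p + n) n
  rw [add_sub_cancel_right, ← hα] at this
  exact this ▸ G_inf_V_le (by omega)

end Fprime

theorem stmt_12_general {R E : Type*} [CommRing R] [AddCommGroup E] [Module R E]
    (v : E →ₗ[R] E) (hv : Function.Injective v)
    (G : ℤ → Submodule R E) (hGmono : Monotone G)
    (hG0 : ∀ k : ℤ, k < 0 → G k = ⊥)
    (hGv : ∀ (m : ℤ) (n : ℕ),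
      G m ⊓ LinearMap.range (v ^ n) = (G (m - n)).map (v ^ n))
    (V : ℚ → Submodule R E)
    (hVv : ∀ γ : ℚ, 0 ≤ γ → γ < 1 → ∀ k : ℕ, 1 ≤ k →
      V (γ - k) = (V γ).map (v ^ k))
    (α : ℚ) (hα0 : 0 ≤ α) (hα1 : α < 1) :
    (∀ p : ℤ,
      Fprime G V α p =
        (⨆ n : ℕ, (G p ⊓ V α).map (v ^ n)) ⊔
          ⨆ j ∈ Finset.Icc (1 : ℤ) p, (G (p - j) ⊓ V (α + (j : ℚ)))) ∧
    (∀ p : ℤ, p < 0 → Fprime G V α p = ⊥) := by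
  have hV := Fprime.V_sub_natCast hVv hα0 hα1
  have formula : ∀ p : ℤ, Fprime G V α p = _ := fun p =>
    le_antisymm (Fprime.le_iSup_map_sup_iSup_Icc hv hGmono hG0 hGv hV p) (Fprime.iSup_map_sup_iSup_Icc_le hv hGv hV p)
  refine ⟨formula, fun p hp => ?_⟩
  rw [formula p, hG0 p hp, Finset.Icc_eq_empty (by omega)]
  simp

/-- `F'_{α+p} = Σ_{n≥0} v^n(G_p ∩ V_α) + Σ_{j=1}^p (G_{p−j} ∩ V_{α+j})`; in
particular `F'_{α+p} = 0` for `p < 0`. -/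
theorem stmt_12 {R E : Type*} [CommRing R] [AddCommGroup E] [Module R E]
    (v : E →ₗ[R] E) (hv : Function.Injective v)
    (G : ℤ → Submodule R E) (hGmono : Monotone G)
    (hG0 : ∀ k : ℤ, k < 0 → G k = ⊥)
    (hGv : ∀ (m : ℤ) (n : ℕ),
      G m ⊓ LinearMap.range (v ^ n) = (G (m - n)).map (v ^ n))
    (V : ℚ → Submodule R E) (hVmono : Monotone V)
    (hVv : ∀ γ : ℚ, 0 ≤ γ → γ < 1 → ∀ k : ℕ, 1 ≤ k →
      V (γ - k) = (V γ).map (v ^ k))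
    (α : ℚ) (hα0 : 0 ≤ α) (hα1 : α < 1) :
    (∀ p : ℤ,
      Fprime G V α p =
        (⨆ n : ℕ, (G p ⊓ V α).map (v ^ n)) ⊔
          ⨆ j ∈ Finset.Icc (1 : ℤ) p, (G (p - j) ⊓ V (α + (j : ℚ)))) ∧
    (∀ p : ℤ, p < 0 → Fprime G V α p = ⊥) :=
  stmt_12_general v hv G hGmono hG0 hGv V hVv α hα0 hα1
end

section
/- With the data (E, v, G, V, α) as in the context, let β ∈ ℚ with 0 ≤ β < 1 and let p ≥ 0. Then: if β > α, F'_{α+p} ∩ V_β = Σ_{n≥0} v^n(G_p ∩ V_α) + (G_{p−1} ∩ V_β); and if β ≤ α, F'_{α+p} ∩ V_β = Σ_{n≥1} v^n(G_p ∩ V_α) + (G_p ∩ V_β). -/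
/-! The compatibility of `G` with `v` makes `G_k ∩ V_{α-n} = v^n(G_{k-n} ∩ V_α)` for `n ≥ 0`, so every
summand of `F'_{α+p}` with `j ≤ 0` lies in `Σ_n v^n(G_p ∩ V_α)`, and every summand with `j ≥ 1` lies in
`G_{p-1}`. Conversely, `v^n(G_p ∩ V_α)` is the summand `G_{p+n} ∩ V_{α-n}`. Both formulas then follow
from the modular law, after splitting off the term `n = 0` when `β ≤ α`. -/

theorem inf_eq_sup_inf_of_le_sup {L : Type*} [Lattice L] [IsModularLattice L] {a b t h : L}
    (hta : t ≤ a) (htb : t ≤ b) (hha : h ⊓ b ≤ a) (hle : a ≤ t ⊔ h) :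
    a ⊓ b = t ⊔ h ⊓ b :=
  le_antisymm
    (calc a ⊓ b ≤ (t ⊔ h) ⊓ b := inf_le_inf_right b hle
      _ = t ⊔ h ⊓ b := sup_inf_assoc_of_le h htb)
    (sup_le (le_inf hta htb) (le_inf hha inf_le_right))

section Filtrations

variable {R E : Type*} [CommRing R] [AddCommGroup E] [Module R E]
  {v : E →ₗ[R] E} {G : ℤ → Submodule R E} {V : ℚ → Submodule R E}

theorem le_Fprime (G : ℤ → Submodule R E) (V : ℚ → Submodule R E) (α : ℚ) {p k j : ℤ}
    (h : k + j ≤ p) : G k ⊓ V (α + j) ≤ Fprime G V α p :=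
  le_iSup_of_le k (le_iSup_of_le j (le_iSup_of_le h le_rfl))

theorem inf_map_pow_eq (hv : Function.Injective v)
    (hGv : ∀ (m : ℤ) (n : ℕ), G m ⊓ LinearMap.range (v ^ n) = (G (m - n)).map (v ^ n))
    (m : ℤ) (n : ℕ) (W : Submodule R E) :
    G m ⊓ W.map (v ^ n) = (G (m - n) ⊓ W).map (v ^ n) := by
  have hvn : Function.Injective (v ^ n) := by
    rw [Module.End.coe_pow]
    exact hv.iterate n
  rw [Submodule.map_inf _ hvn, ← hGv, inf_assoc, inf_eq_right.mpr LinearMap.map_le_range]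

theorem V_sub_natCast_eq_map_pow
    (hVv : ∀ γ : ℚ, 0 ≤ γ → γ < 1 → ∀ k : ℕ, 1 ≤ k → V (γ - k) = (V γ).map (v ^ k))
    {α : ℚ} (hα0 : 0 ≤ α) (hα1 : α < 1) (n : ℕ) :
    V (α - n) = (V α).map (v ^ n) := by
  rcases Nat.eq_zero_or_pos n with rfl | hn
  · simp [Module.End.one_eq_id]
  · exact hVv α hα0 hα1 n hn

theorem map_pow_inf_le_Fprime (hv : Function.Injective v)
    (hGv : ∀ (m : ℤ) (n : ℕ), G m ⊓ LinearMap.range (v ^ n) = (G (m - n)).map (v ^ n))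
    (hVv : ∀ γ : ℚ, 0 ≤ γ → γ < 1 → ∀ k : ℕ, 1 ≤ k → V (γ - k) = (V γ).map (v ^ k))
    {α : ℚ} (hα0 : 0 ≤ α) (hα1 : α < 1) (p : ℤ) (n : ℕ) :
    (G p ⊓ V α).map (v ^ n) ≤ Fprime G V α p := by
  have h := inf_map_pow_eq hv hGv (p + n) n (V α)
  rw [add_sub_cancel_right, ← V_sub_natCast_eq_map_pow hVv hα0 hα1] at h
  have hα : α - n = α + ((-n : ℤ) : ℚ) := by push_cast; ring
  rw [← h, hα]
  exact le_Fprime G V α (by omega)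

theorem Fprime_le_iSup_map_pow_sup (hv : Function.Injective v) (hGmono : Monotone G)
    (hGv : ∀ (m : ℤ) (n : ℕ), G m ⊓ LinearMap.range (v ^ n) = (G (m - n)).map (v ^ n))
    (hVv : ∀ γ : ℚ, 0 ≤ γ → γ < 1 → ∀ k : ℕ, 1 ≤ k → V (γ - k) = (V γ).map (v ^ k))
    {α : ℚ} (hα0 : 0 ≤ α) (hα1 : α < 1) (p : ℤ) :
    Fprime G V α p ≤ (⨆ n : ℕ, (G p ⊓ V α).map (v ^ n)) ⊔ G (p - 1) := by
  refine iSup_le fun k => iSup_le fun j => iSup_le fun hkj => ?_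
  rcases le_or_gt j 0 with hj | hj
  · obtain ⟨n, rfl⟩ : ∃ n : ℕ, j = -n := ⟨(-j).toNat, by omega⟩
    have hα : α + ((-n : ℤ) : ℚ) = α - n := by push_cast; ring
    rw [hα, V_sub_natCast_eq_map_pow hVv hα0 hα1, inf_map_pow_eq hv hGv]
    exact le_sup_of_le_left <| le_iSup_of_le n <|
      Submodule.map_mono (inf_le_inf_right _ (hGmono (by omega)))
  · exact le_sup_of_le_right (inf_le_left.trans (hGmono (by omega)))

end Filtrations

theorem stmt_13_general {R E : Type*} [CommRing R] [AddCommGroup E] [Module R E]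
    (v : E →ₗ[R] E) (hv : Function.Injective v)
    (G : ℤ → Submodule R E) (hGmono : Monotone G)
    (hGv : ∀ (m : ℤ) (n : ℕ),
      G m ⊓ LinearMap.range (v ^ n) = (G (m - n)).map (v ^ n))
    (V : ℚ → Submodule R E) (hVmono : Monotone V)
    (hVv : ∀ γ : ℚ, 0 ≤ γ → γ < 1 → ∀ k : ℕ, 1 ≤ k →
      V (γ - k) = (V γ).map (v ^ k))
    (α : ℚ) (hα0 : 0 ≤ α) (hα1 : α < 1)
    (β : ℚ) (hβ0 : 0 ≤ β) (hβ1 : β < 1) (p : ℤ) :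
    (α < β →
      Fprime G V α p ⊓ V β =
        (⨆ n : ℕ, (G p ⊓ V α).map (v ^ n)) ⊔ (G (p - 1) ⊓ V β)) ∧
    (β ≤ α →
      Fprime G V α p ⊓ V β =
        (⨆ n : ℕ, (G p ⊓ V α).map (v ^ (n + 1))) ⊔ (G p ⊓ V β)) := by
  have hmap_le_V (n : ℕ) : (G p ⊓ V α).map (v ^ n) ≤ V (α - n) := by
    rw [V_sub_natCast_eq_map_pow hVv hα0 hα1]
    exact Submodule.map_mono inf_le_right
  have hmap_le_F := map_pow_inf_le_Fprime hv hGv hVv hα0 hα1 p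
  have hF_le := Fprime_le_iSup_map_pow_sup hv hGmono hGv hVv hα0 hα1 p
  constructor
  · intro hαβ
    refine inf_eq_sup_inf_of_le_sup (iSup_le hmap_le_F)
      (iSup_le fun n => (hmap_le_V n).trans (hVmono (by linarith [n.cast_nonneg (α := ℚ)])))
      ?_ hF_le
    have h := le_Fprime G V α (p := p) (k := p - 1) (j := 1) (by omega)
    rw [Int.cast_one] at h
    exact (inf_le_inf_left _ (hVmono (by linarith))).trans h
  · intro hβα
    refine inf_eq_sup_inf_of_le_sup (iSup_le fun n => hmap_le_F (n + 1))
      (iSup_le fun n => (hmap_le_V (n + 1)).trans (hVmono (by push_cast; linarith)))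
      ?_ (hF_le.trans ?_)
    · have h := le_Fprime G V α (p := p) (k := p) (j := 0) (by omega)
      rw [Int.cast_zero, add_zero] at h
      exact (inf_le_inf_left _ (hVmono hβα)).trans h
    · rw [← sup_iSup_nat_succ]
      simp only [pow_zero, Module.End.one_eq_id, Submodule.map_id]
      exact sup_le (sup_le (le_sup_of_le_right inf_le_left) le_sup_left)
        (le_sup_of_le_right (hGmono (by omega)))

/-- For `β ∈ [0,1)` and `p ≥ 0`:
if `β > α`, `F'_{α+p} ∩ V_β = Σ_{n≥0} v^n(G_p ∩ V_α) + (G_{p−1} ∩ V_β)`;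
if `β ≤ α`, `F'_{α+p} ∩ V_β = Σ_{n≥1} v^n(G_p ∩ V_α) + (G_p ∩ V_β)`. -/
theorem stmt_13 {R E : Type*} [CommRing R] [AddCommGroup E] [Module R E]
    (v : E →ₗ[R] E) (hv : Function.Injective v)
    (G : ℤ → Submodule R E) (hGmono : Monotone G)
    (hG0 : ∀ k : ℤ, k < 0 → G k = ⊥)
    (hGv : ∀ (m : ℤ) (n : ℕ),
      G m ⊓ LinearMap.range (v ^ n) = (G (m - n)).map (v ^ n))
    (V : ℚ → Submodule R E) (hVmono : Monotone V)
    (hVv : ∀ γ : ℚ, 0 ≤ γ → γ < 1 → ∀ k : ℕ, 1 ≤ k →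
      V (γ - k) = (V γ).map (v ^ k))
    (α : ℚ) (hα0 : 0 ≤ α) (hα1 : α < 1)
    (β : ℚ) (hβ0 : 0 ≤ β) (hβ1 : β < 1) (p : ℤ) (hp : 0 ≤ p) :
    (α < β →
      Fprime G V α p ⊓ V β =
        (⨆ n : ℕ, (G p ⊓ V α).map (v ^ n)) ⊔ (G (p - 1) ⊓ V β)) ∧
    (β ≤ α →
      Fprime G V α p ⊓ V β =
        (⨆ n : ℕ, (G p ⊓ V α).map (v ^ (n + 1))) ⊔ (G p ⊓ V β)) :=
  stmt_13_general v hv G hGmono hGv V hVmono hVv α hα0 hα1 β hβ0 hβ1 p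
end

section
/- With the data (E, v, G, V, α) as in the context, let β ∈ ℚ with 0 ≤ β < 1, let p ≥ 0 and let ℓ ≥ 1 be an integer. Then F'_{α+p} ∩ V_{β−ℓ} = v^ℓ(F'_{α+p} ∩ V_β). -/
/-- For `β ∈ [0,1)`, `p ≥ 0` and `ℓ ≥ 1`:
`F'_{α+p} ∩ V_{β−ℓ} = v^ℓ(F'_{α+p} ∩ V_β)`. -/
theorem stmt_14 {R E : Type*} [CommRing R] [AddCommGroup E] [Module R E]
    (v : E →ₗ[R] E) (hv : Function.Injective v)
    (G : ℤ → Submodule R E) (hGmono : Monotone G)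
    (hG0 : ∀ k : ℤ, k < 0 → G k = ⊥)
    (hGv : ∀ (m : ℤ) (n : ℕ),
      G m ⊓ LinearMap.range (v ^ n) = (G (m - n)).map (v ^ n))
    (V : ℚ → Submodule R E) (hVmono : Monotone V)
    (hVv : ∀ γ : ℚ, 0 ≤ γ → γ < 1 → ∀ k : ℕ, 1 ≤ k →
      V (γ - k) = (V γ).map (v ^ k))
    (α : ℚ) (hα0 : 0 ≤ α) (hα1 : α < 1)
    (β : ℚ) (hβ0 : 0 ≤ β) (hβ1 : β < 1) (p : ℤ) (hp : 0 ≤ p)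
    (l : ℕ) (hl : 1 ≤ l) :
    Fprime G V α p ⊓ V (β - l) = (Fprime G V α p ⊓ V β).map (v ^ l) := by
  -- injectivity of powers of v
  have hvn : ∀ n : ℕ, Function.Injective (v ^ n : E →ₗ[R] E) := by
    intro n a b hab
    have h : (⇑v)^[n] a = (⇑v)^[n] b := by
      simpa [Module.End.pow_apply] using hab
    exact hv.iterate n h
  -- composition of maps
  have hcomp : ∀ (S : Submodule R E) (a b : ℕ),
      (S.map (v ^ b)).map (v ^ a) = S.map (v ^ (a + b)) := by
    intro S a b
    rw [pow_add, Module.End.mul_eq_comp, Submodule.map_comp]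
  -- V shifting lemma
  have hVmap : ∀ (γ : ℚ), 0 ≤ γ → γ < 1 → ∀ (j : ℤ), j ≤ 0 → ∀ n : ℕ, 1 ≤ n →
      (V (γ + (j : ℚ))).map (v ^ n) = V (γ + (j : ℚ) - n) := by
    intro γ h0 h1 j hj n hn
    obtain ⟨m, rfl⟩ : ∃ m : ℕ, j = -(m : ℤ) := ⟨(-j).toNat, by omega⟩
    rcases Nat.eq_zero_or_pos m with hm | hm
    · subst hm
      have e2 : (γ + ((-(0:ℕ) : ℤ) : ℚ)) = γ := by push_cast; ring
      rw [e2]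
      exact (hVv γ h0 h1 n hn).symm
    · have e1 : V (γ + ((-(m:ℕ) : ℤ) : ℚ)) = (V γ).map (v ^ m) := by
        rw [show (γ + ((-(m:ℕ) : ℤ) : ℚ)) = γ - m by push_cast; ring]
        exact hVv γ h0 h1 m hm
      rw [e1, hcomp, ← hVv γ h0 h1 (n + m) (by omega)]
      congr 1
      push_cast; ring
  -- G mapping lemma
  have hGmap : ∀ (m : ℤ) (n : ℕ), (G m).map (v ^ n) ≤ G (m + n) := by
    intro m n
    have h := hGv (m + n) n
    rw [show (m + (n:ℤ) - (n:ℤ)) = m by ring] at h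
    rw [← h]
    exact inf_le_left
  -- generators are in Fprime
  have hFgen : ∀ (k j : ℤ), k + j ≤ p → G k ⊓ V (α + (j : ℚ)) ≤ Fprime G V α p :=
    fun k j hkj => le_iSup_of_le k (le_iSup_of_le j (le_iSup_of_le hkj le_rfl))
  -- the tail submodule
  set T : ℤ → Submodule R E := fun q =>
    ⨆ (k : ℤ) (_ : q + 1 ≤ k), (G k ⊓ V (α + ((p - k : ℤ) : ℚ))) with hT
  -- splitting lemma
  have hsplit : ∀ q : ℤ, Fprime G V α p ≤ (G q ⊓ Fprime G V α p) ⊔ T q := by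
    intro q
    refine iSup_le fun k => iSup_le fun j => iSup_le fun hkj => ?_
    by_cases hk : k ≤ q
    · exact le_sup_of_le_left
        (le_inf (inf_le_left.trans (hGmono hk)) (hFgen k j hkj))
    · refine le_sup_of_le_right ?_
      refine le_trans (inf_le_inf_left _ (hVmono ?_))
        (le_iSup_of_le k (le_iSup_of_le (by omega) le_rfl))
      have : (j : ℚ) ≤ ((p - k : ℤ) : ℚ) := by exact_mod_cast (by omega : j ≤ p - k)
      linarith
  -- tail is inside V α
  have hTVα : ∀ q : ℤ, p - 1 ≤ q → T q ≤ V α := by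
    intro q hq
    refine iSup_le fun k => iSup_le fun hk => ?_
    refine inf_le_right.trans (hVmono ?_)
    have : ((p - k : ℤ) : ℚ) ≤ 0 := by exact_mod_cast (by omega : p - k ≤ 0)
    linarith
  have hVβl : V (β - l) = (V β).map (v ^ l) := by
    simpa using hVv β hβ0 hβ1 l hl
  apply le_antisymm
  · -- F ⊓ V (β - l) ≤ (F ⊓ V β).map (v ^ l)
    set j0 : ℤ := if β ≤ α then 0 else 1 with hj0
    have hj01 : j0 = 0 ∨ j0 = 1 := by rw [hj0]; split <;> simp
    have hβj0 : β ≤ α + (j0 : ℚ) := by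
      rw [hj0]; split
      · simpa using ‹β ≤ α›
      · push_cast; linarith
    set q : ℤ := p + l - j0 with hq
    intro x hx
    obtain ⟨h, hh, t, ht, hht⟩ := Submodule.mem_sup.mp (hsplit q hx.1)
    -- tail is in the image
    have hTle : T q ≤ (Fprime G V α p ⊓ V β).map (v ^ l) := by
      refine iSup_le fun k => iSup_le fun hk => ?_
      have hkl : (l : ℤ) ≤ k - p := by omega
      have hVeq : V (α + ((p - k : ℤ) : ℚ)) =
          (V (α + ((p + l - k : ℤ) : ℚ))).map (v ^ l) := by
        rw [hVmap α hα0 hα1 (p + l - k) (by omega) l hl]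
        congr 1
        push_cast; ring
      have hGeq : G k ⊓ LinearMap.range (v ^ l) = (G (k - l)).map (v ^ l) := hGv k l
      have hrange : V (α + ((p - k : ℤ) : ℚ)) ≤ LinearMap.range (v ^ l) := by
        intro y hy
        rw [hVeq] at hy
        obtain ⟨z, _, rfl⟩ := hy
        exact ⟨z, rfl⟩
      have step1 : G k ⊓ V (α + ((p - k : ℤ) : ℚ)) ≤
          (G (k - l)).map (v ^ l) ⊓ (V (α + ((p + l - k : ℤ) : ℚ))).map (v ^ l) := by
        refine le_inf ?_ (inf_le_right.trans (le_of_eq hVeq))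
        rw [← hGeq]
        exact le_inf inf_le_left (inf_le_right.trans hrange)
      rw [← Submodule.map_inf _ (hvn l)] at step1
      have hcase : α + ((p + l - k : ℤ) : ℚ) ≤ β := by
        rcases hj01 with hj | hj
        · have h1 : (p : ℤ) + l - k ≤ -1 := by omega
          have h2 : ((p + l - k : ℤ) : ℚ) ≤ -1 := by exact_mod_cast h1
          linarith
        · have hba : ¬ β ≤ α := by
            intro hc; rw [hj0] at hj; simp [hc] at hj
          push_neg at hba
          have h1 : (p : ℤ) + l - k ≤ 0 := by omega
          have h2 : ((p + l - k : ℤ) : ℚ) ≤ 0 := by exact_mod_cast h1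
          linarith
      exact step1.trans (Submodule.map_mono
        (le_inf (hFgen (k - l) (p + l - k) (by omega))
          (inf_le_right.trans (hVmono hcase))))
    have htmem : t ∈ (Fprime G V α p ⊓ V β).map (v ^ l) := hTle ht
    -- head
    have ht' : t ∈ V (β - l) := by
      have hle : (Fprime G V α p ⊓ V β).map (v ^ l) ≤ V (β - l) := by
        rw [hVβl]; exact Submodule.map_mono inf_le_right
      exact hle htmem
    have hhV : h ∈ V (β - l) := by
      have heq : h = x - t := by rw [← hht]; abel
      rw [heq]
      exact Submodule.sub_mem _ hx.2 ht'
    have hhrange : h ∈ LinearMap.range (v ^ l) := by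
      rw [hVβl] at hhV
      obtain ⟨z, _, rfl⟩ := hhV
      exact ⟨z, rfl⟩
    have hhG : h ∈ (G (q - l)).map (v ^ l) := by
      rw [← hGv q l]
      exact ⟨hh.1, hhrange⟩
    have hhmem : h ∈ ((G (q - l)) ⊓ V β).map (v ^ l) := by
      rw [Submodule.map_inf _ (hvn l)]
      refine ⟨hhG, ?_⟩
      rw [← hVβl]
      exact hhV
    have hGVF : G (q - l) ⊓ V β ≤ Fprime G V α p ⊓ V β := by
      refine le_inf ?_ inf_le_right
      have : G (q - l) ⊓ V β ≤ G (p - j0) ⊓ V (α + (j0 : ℚ)) := by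
        refine inf_le_inf ?_ (hVmono hβj0)
        rw [show q - l = p - j0 by omega]
      exact this.trans (hFgen (p - j0) j0 (by omega))
    have : x ∈ (Fprime G V α p ⊓ V β).map (v ^ l) := by
      rw [← hht]
      exact Submodule.add_mem _ (Submodule.map_mono hGVF hhmem) htmem
    exact this
  · -- (F ⊓ V β).map (v ^ l) ≤ F ⊓ V (β - l)
    rintro x ⟨y, hy, rfl⟩
    refine ⟨?_, by rw [hVβl]; exact Submodule.mem_map_of_mem hy.2⟩
    obtain ⟨h, hh, t, ht, hht⟩ := Submodule.mem_sup.mp (hsplit (p - 1) hy.1)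
    -- tail part maps into F
    have hTF : T (p - 1) ≤ (Fprime G V α p).comap (v ^ l) := by
      refine iSup_le fun k => iSup_le fun hk => ?_
      rw [← Submodule.map_le_iff_le_comap]
      refine le_trans (Submodule.map_inf_le _) ?_
      have hVeq : (V (α + ((p - k : ℤ) : ℚ))).map (v ^ l) =
          V (α + ((p - k - l : ℤ) : ℚ)) := by
        rw [hVmap α hα0 hα1 (p - k) (by omega) l hl]
        congr 1
        push_cast; ring
      rw [hVeq]
      exact le_trans (inf_le_inf_right _ (hGmap k l)) (hFgen (k + l) (p - k - l) (by omega))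
    -- head part
    set γ : ℚ := max α β with hγ
    have hγ0 : 0 ≤ γ := le_trans hα0 (le_max_left _ _)
    have hγ1 : γ < 1 := max_lt hα1 hβ1
    have hhγ : h ∈ V γ := by
      have heq : h = y - t := by rw [← hht]; abel
      rw [heq]
      exact Submodule.sub_mem _ (hVmono (le_max_right _ _) hy.2)
        (hVmono (le_max_left _ _) (hTVα (p - 1) (by omega) ht))
    have hhF : (v ^ l) h ∈ Fprime G V α p := by
      have step : ((G (p - 1)) ⊓ V γ).map (v ^ l) ≤
          G (p - 1 + l) ⊓ V (γ - l) := by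
        refine le_trans (Submodule.map_inf_le _) (inf_le_inf (hGmap (p - 1) l) ?_)
        have := hVmap γ hγ0 hγ1 0 le_rfl l hl
        simp only [Int.cast_zero, add_zero] at this
        rw [this]
      have step2 : G (p - 1 + l) ⊓ V (γ - l) ≤ Fprime G V α p := by
        refine le_trans (inf_le_inf_left _ (hVmono ?_)) (hFgen (p - 1 + l) (1 - l) (by omega))
        have : ((1 - l : ℤ) : ℚ) = 1 - l := by push_cast; ring
        rw [this]
        have : γ ≤ α + 1 := by linarith
        linarith
      exact step2 (step (Submodule.mem_map_of_mem ⟨hh.1, hhγ⟩))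
    have : (v ^ l) y = (v ^ l) h + (v ^ l) t := by
      rw [← hht]; exact map_add _ _ _
    rw [this]
    exact Submodule.add_mem _ hhF (hTF ht)
end

section
/- With the data (E, v, G, V, α) as in the context, for every k ∈ ℤ and every integer j ≥ 0, the map v^j restricts to a bijection from G_k ∩ V_α onto G_{k+j} ∩ V_{α−j}; in particular v^j(G_k ∩ V_α) = G_{k+j} ∩ V_{α−j} as submodules of E. -/
open Function LinearMap

theorem Submodule.map_inf_of_map_eq_inf_range {R M N : Type*} [Semiring R] [AddCommMonoid M]
    [AddCommMonoid N] [Module R M] [Module R N] {f : M →ₗ[R] N} (hf : Injective f)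
    {p q : Submodule R M} {p' : Submodule R N} (hp : p.map f = p' ⊓ range f) :
    (p ⊓ q).map f = p' ⊓ q.map f := by
  rw [Submodule.map_inf _ hf, hp, inf_assoc, inf_eq_right.mpr LinearMap.map_le_range]

theorem Module.End.injective_pow {R M : Type*} [Semiring R] [AddCommMonoid M] [Module R M]
    {f : Module.End R M} (hf : Function.Injective f) (n : ℕ) : Function.Injective ⇑(f ^ n) := by
  rw [Module.End.coe_pow]
  exact hf.iterate n

theorem stmt_15_general {R E : Type*} [CommRing R] [AddCommGroup E] [Module R E]
    (v : E →ₗ[R] E) (hv : Function.Injective v)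
    (G : ℤ → Submodule R E)
    (hGv : ∀ (m : ℤ) (n : ℕ),
      G m ⊓ LinearMap.range (v ^ n) = (G (m - n)).map (v ^ n))
    (V : ℚ → Submodule R E)
    (hVv : ∀ γ : ℚ, 0 ≤ γ → γ < 1 → ∀ k : ℕ, 1 ≤ k →
      V (γ - k) = (V γ).map (v ^ k))
    (α : ℚ) (hα0 : 0 ≤ α) (hα1 : α < 1) :
    ∀ (k : ℤ) (j : ℕ),
      Set.BijOn (v ^ j) ((G k ⊓ V α : Submodule R E) : Set E)
        ((G (k + j) ⊓ V (α - j) : Submodule R E) : Set E) ∧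
      (G k ⊓ V α).map (v ^ j) = G (k + j) ⊓ V (α - j) := by
  intro k j
  have hinj := Module.End.injective_pow hv j
  have hG : (G k).map (v ^ j) = G (k + j) ⊓ range (v ^ j) := by
    simpa using (hGv (k + j) j).symm
  have hV : (V α).map (v ^ j) = V (α - j) := by
    rcases j.eq_zero_or_pos with rfl | hj
    · simp [Module.End.one_eq_id]
    · exact (hVv α hα0 hα1 j hj).symm
  have hmap : (G k ⊓ V α).map (v ^ j) = G (k + j) ⊓ V (α - j) := by
    rw [Submodule.map_inf_of_map_eq_inf_range hinj hG, hV]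
  refine ⟨?_, hmap⟩
  rw [← hmap, Submodule.map_coe]
  exact hinj.injOn.bijOn_image

/-- For every `k ∈ ℤ` and `j ≥ 0`, `v^j` restricts to a bijection from
`G_k ∩ V_α` onto `G_{k+j} ∩ V_{α−j}`; in particular
`v^j(G_k ∩ V_α) = G_{k+j} ∩ V_{α−j}`. -/
theorem stmt_15 {R E : Type*} [CommRing R] [AddCommGroup E] [Module R E]
    (v : E →ₗ[R] E) (hv : Function.Injective v)
    (G : ℤ → Submodule R E) (hGmono : Monotone G)
    (hG0 : ∀ k : ℤ, k < 0 → G k = ⊥)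
    (hGv : ∀ (m : ℤ) (n : ℕ),
      G m ⊓ LinearMap.range (v ^ n) = (G (m - n)).map (v ^ n))
    (V : ℚ → Submodule R E) (hVmono : Monotone V)
    (hVv : ∀ γ : ℚ, 0 ≤ γ → γ < 1 → ∀ k : ℕ, 1 ≤ k →
      V (γ - k) = (V γ).map (v ^ k))
    (α : ℚ) (hα0 : 0 ≤ α) (hα1 : α < 1) :
    ∀ (k : ℤ) (j : ℕ),
      Set.BijOn (v ^ j) ((G k ⊓ V α : Submodule R E) : Set E)
        ((G (k + j) ⊓ V (α - j) : Submodule R E) : Set E) ∧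
      (G k ⊓ V α).map (v ^ j) = G (k + j) ⊓ V (α - j) :=
  stmt_15_general v hv G hGv V hVv α hα0 hα1
end
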